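/- arXiv:1403.6292 — 2 statements merged into one kernel-verified Lean document; each statement's English description precedes it below -/
import Mathlib

section
/- Let 0 < q < 1, λ > 0, and p > 1. For every sequence (a_n)_{n∈ℤ} of nonnegative reals, ∑_{n∈ℤ} (q^{λn} ∑_{k=-∞}^{n} q^{-λk} a_k)^p ≤ (1-q^λ)^{-p} ∑_{n∈ℤ} a_n^p. -/
/-!
Substituting `k = n - m`, the inner sum is the convolution of `a` with the weight
`w m = q^{λ m}` on `ℕ`, whose total mass is `(1 - q^λ)⁻¹`. The weighted Hölder (Jensen) inequality
bounds the `p`-th power of each convolution term by `(∑ w)^{p-1} ∑ₘ w m a(n - m)^p`; summing over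
`n` and using shift invariance of the sum over `ℤ` gives Young's bound `(∑ w)^p ∑ aₙ^p`.
-/

open scoped ENNReal

namespace ENNReal

variable {ι : Type*} {p : ℝ}

theorem inner_le_weight_mul_Lp_tsum (hp : 1 ≤ p) (w f : ι → ℝ≥0∞) :
    ∑' i, w i * f i ≤ (∑' i, w i) ^ (1 - p⁻¹) * (∑' i, w i * f i ^ p) ^ p⁻¹ := by
  have hp₁ : 0 ≤ 1 - p⁻¹ := sub_nonneg.2 (inv_le_one_of_one_le₀ hp)
  rw [ENNReal.tsum_eq_iSup_sum]
  refine iSup_le fun s => (inner_le_weight_mul_Lp_of_nonneg s hp w f).trans ?_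
  gcongr <;> exact ENNReal.sum_le_tsum s

theorem rpow_inner_le_weight_mul_tsum (hp : 1 ≤ p) (w f : ι → ℝ≥0∞) :
    (∑' i, w i * f i) ^ p ≤ (∑' i, w i) ^ (p - 1) * ∑' i, w i * f i ^ p := by
  have hp₀ : 0 < p := by linarith
  calc (∑' i, w i * f i) ^ p
      ≤ ((∑' i, w i) ^ (1 - p⁻¹) * (∑' i, w i * f i ^ p) ^ p⁻¹) ^ p := by
        gcongr; exact inner_le_weight_mul_Lp_tsum hp w f
    _ = (∑' i, w i) ^ (p - 1) * ∑' i, w i * f i ^ p := by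
        rw [ENNReal.mul_rpow_of_nonneg _ _ hp₀.le, ← ENNReal.rpow_mul, ← ENNReal.rpow_mul,
          inv_mul_cancel₀ hp₀.ne', ENNReal.rpow_one, sub_mul, one_mul, inv_mul_cancel₀ hp₀.ne']

theorem tsum_rpow_tsum_mul_sub_le {G : Type*} [AddGroup G] (hp : 1 ≤ p) (s : ι → G)
    (w : ι → ℝ≥0∞) (a : G → ℝ≥0∞) :
    ∑' g, (∑' i, w i * a (g - s i)) ^ p ≤ (∑' i, w i) ^ p * ∑' g, a g ^ p := by
  have hshift : ∀ i, ∑' g, a (g - s i) ^ p = ∑' g, a g ^ p := fun i =>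
    (Equiv.subRight (s i)).tsum_eq fun g => a g ^ p
  calc ∑' g, (∑' i, w i * a (g - s i)) ^ p
      ≤ ∑' g, (∑' i, w i) ^ (p - 1) * ∑' i, w i * a (g - s i) ^ p :=
        ENNReal.tsum_le_tsum fun g => rpow_inner_le_weight_mul_tsum hp w _
    _ = (∑' i, w i) ^ (p - 1) * ((∑' i, w i) * ∑' g, a g ^ p) := by
        simp_rw [ENNReal.tsum_mul_left, ENNReal.tsum_comm (α := G), ENNReal.tsum_mul_left,
          hshift, ENNReal.tsum_mul_right]
    _ = (∑' i, w i) ^ p * ∑' g, a g ^ p := by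
        nth_rw 2 [← ENNReal.rpow_one (∑' i, w i)]
        rw [← mul_assoc, ← ENNReal.rpow_add_of_nonneg _ _ (by linarith) zero_le_one, sub_add_cancel]

theorem tsum_rpow_mul_natCast (x : ℝ≥0∞) (l : ℝ) :
    ∑' m : ℕ, x ^ (l * m) = (1 - x ^ l)⁻¹ := by
  simp_rw [ENNReal.rpow_mul_natCast, ENNReal.tsum_geometric]

end ENNReal

theorem hardy_Z (q l p : ℝ) (hq : 0 < q) (hq1 : q < 1) (hl : 0 < l)
    (hp : 1 < p) (a : ℤ → ℝ≥0∞) :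
    ∑' n : ℤ, ((ENNReal.ofReal q) ^ (l * (n : ℝ)) *
        ∑' m : ℕ, (ENNReal.ofReal q) ^ (-(l * ((n : ℝ) - (m : ℝ)))) * a (n - m)) ^ p
      ≤ ENNReal.ofReal ((1 - q ^ l) ^ (-p)) * ∑' n : ℤ, (a n) ^ p := by
  set Q := ENNReal.ofReal q
  have hQ : Q ≠ 0 := by simpa [Q] using hq
  have hconv : ∀ n : ℤ, Q ^ (l * (n : ℝ)) *
      ∑' m : ℕ, Q ^ (-(l * ((n : ℝ) - (m : ℝ)))) * a (n - m)
        = ∑' m : ℕ, Q ^ (l * (m : ℝ)) * a (n - m) := fun n => by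
    rw [← ENNReal.tsum_mul_left]
    refine tsum_congr fun m => ?_
    rw [← mul_assoc, ← ENNReal.rpow_add _ _ hQ ENNReal.ofReal_ne_top]
    ring_nf
  have hgap : 0 < 1 - q ^ l := sub_pos.2 (Real.rpow_lt_one hq.le hq1 hl)
  have hweight : (∑' m : ℕ, Q ^ (l * (m : ℝ))) ^ p = ENNReal.ofReal ((1 - q ^ l) ^ (-p)) := by
    rw [ENNReal.tsum_rpow_mul_natCast, ENNReal.ofReal_rpow_of_pos hq, ← ENNReal.ofReal_one,
      ← ENNReal.ofReal_sub _ (Real.rpow_nonneg hq.le l), ENNReal.inv_rpow, ← ENNReal.rpow_neg,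
      ENNReal.ofReal_rpow_of_pos hgap]
  simp_rw [hconv, ← hweight]
  exact ENNReal.tsum_rpow_tsum_mul_sub_le hp.le (fun m : ℕ => (m : ℤ)) _ a
end

section
/- Let 0 < q < 1, p > 1, and α < 1 - 1/p. The best (smallest) constant C such that ∑_{j∈ℤ} q^{j(p(α-1)+1)} (∑_{i=j}^∞ q^{i(1-α)} f(q^i))^p ≤ C (1-q)^{-p-1} · (1-q) ∑_{i∈ℤ} q^i f(q^i)^p holds for all nonnegative f equals [(p-1)/p - α]_q^{-p}, where [β]_q = (1-q^β)/(1-q). -/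
/-!
Substituting `h i = q^(i/p) f(q^i)` turns the inequality into
`∑_j (∑_m r^m h(j+m))^p ≤ K ∑_i h(i)^p` with `r = q^((p-1)/p - α)`, a convolution on `ℤ` with the
kernel `r^m`. Hölder's inequality gives this with `K = (∑_m r^m)^p = (1 - r)^(-p)`, and the test
functions `h i = t^i` (`i ≥ 0`) show `K ≥ (1 - r t)^(-p)` for every `t < 1`; let `t → 1`.
-/

open scoped ENNReal
open Filter Topology

namespace ENNReal

theorem tsum_mul_le_weight_mul_Lp {ι : Type*} {p : ℝ} (hp : 1 ≤ p) (w f : ι → ℝ≥0∞) :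
    ∑' i, w i * f i ≤ (∑' i, w i) ^ (1 - p⁻¹) * (∑' i, w i * f i ^ p) ^ p⁻¹ := by
  have hp₀ : 0 ≤ p⁻¹ := by positivity
  have hp₁ : 0 ≤ 1 - p⁻¹ := sub_nonneg.2 (inv_le_one_of_one_le₀ hp)
  rw [ENNReal.tsum_eq_iSup_sum]
  refine iSup_le fun s => (inner_le_weight_mul_Lp_of_nonneg s hp w f).trans ?_
  gcongr <;> exact ENNReal.sum_le_tsum s

theorem rpow_tsum_mul_le {ι : Type*} {p : ℝ} (hp : 1 ≤ p) (w f : ι → ℝ≥0∞) :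
    (∑' i, w i * f i) ^ p ≤ (∑' i, w i) ^ (p - 1) * ∑' i, w i * f i ^ p := by
  have hp₀ : 0 < p := by linarith
  calc (∑' i, w i * f i) ^ p
      ≤ ((∑' i, w i) ^ (1 - p⁻¹) * (∑' i, w i * f i ^ p) ^ p⁻¹) ^ p := by
        gcongr; exact tsum_mul_le_weight_mul_Lp hp w f
    _ = (∑' i, w i) ^ (p - 1) * ∑' i, w i * f i ^ p := by
        rw [mul_rpow_of_nonneg _ _ hp₀.le, ← rpow_mul, ← rpow_mul, inv_mul_cancel₀ hp₀.ne',
          rpow_one, sub_mul, one_mul, inv_mul_cancel₀ hp₀.ne']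

end ENNReal

theorem tsum_rpow_tsum_mul_add_le {p : ℝ} (hp : 1 ≤ p) (k : ℕ → ℝ≥0∞) (h : ℤ → ℝ≥0∞) :
    ∑' j : ℤ, (∑' m : ℕ, k m * h (j + m)) ^ p ≤ (∑' m, k m) ^ p * ∑' i, h i ^ p := by
  calc ∑' j : ℤ, (∑' m : ℕ, k m * h (j + m)) ^ p
      ≤ ∑' j : ℤ, (∑' m, k m) ^ (p - 1) * ∑' m : ℕ, k m * h (j + m) ^ p :=
        ENNReal.tsum_le_tsum fun j => ENNReal.rpow_tsum_mul_le hp _ _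
    _ = (∑' m, k m) ^ (p - 1) * ∑' m : ℕ, k m * ∑' j : ℤ, h (j + m) ^ p := by
        rw [ENNReal.tsum_mul_left, ENNReal.tsum_comm]
        simp_rw [ENNReal.tsum_mul_left]
    _ = (∑' m, k m) ^ (p - 1 + 1) * ∑' i, h i ^ p := by
        have hshift (m : ℕ) : ∑' j : ℤ, h (j + m) ^ p = ∑' i, h i ^ p :=
          (Equiv.addRight (m : ℤ)).tsum_eq fun i => h i ^ p
        simp_rw [hshift, ENNReal.tsum_mul_right,
          ENNReal.rpow_add_of_nonneg _ _ (sub_nonneg.2 hp) zero_le_one, ENNReal.rpow_one, mul_assoc]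
    _ = (∑' m, k m) ^ p * ∑' i, h i ^ p := by rw [sub_add_cancel]

theorem tsum_int_eq_tsum_nat_of_neg_eq_zero {u : ℤ → ℝ≥0∞} (hu : ∀ i < 0, u i = 0) :
    ∑' i, u i = ∑' n : ℕ, u n := by
  refine (Nat.cast_injective.tsum_eq fun i hi => ?_).symm
  exact ⟨i.toNat, Int.toNat_of_nonneg (not_lt.1 fun h => hi (hu i h))⟩

theorem inv_one_sub_mul_rpow_le_of_geometric_kernel_bound {r K t : ℝ≥0∞} {p : ℝ} (hp : 0 < p)
    (ht : t < 1) (hK : ∀ h : ℤ → ℝ≥0∞,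
      ∑' j : ℤ, (∑' m : ℕ, r ^ m * h (j + m)) ^ p ≤ K * ∑' i, h i ^ p) :
    (1 - r * t)⁻¹ ^ p ≤ K := by
  set h : ℤ → ℝ≥0∞ := fun i => if 0 ≤ i then t ^ i.toNat else 0
  have hnorm : ∑' i, h i ^ p = (1 - t ^ p)⁻¹ := by
    rw [tsum_int_eq_tsum_nat_of_neg_eq_zero fun i hi => by simp [h, hi.not_ge, hp]]
    simp [h, ← ENNReal.rpow_natCast_mul, mul_comm _ p, ENNReal.rpow_mul_natCast,
      ENNReal.tsum_geometric]
  have hinner (n : ℕ) : ∑' m : ℕ, r ^ m * h (n + m) = t ^ n * (1 - r * t)⁻¹ := by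
    have (m : ℕ) : r ^ m * h (n + m) = t ^ n * (r * t) ^ m := by
      rw [← Nat.cast_add]
      simp only [h, Nat.cast_nonneg, if_true, Int.toNat_natCast, pow_add, mul_pow]
      ring
    simp_rw [this, ENNReal.tsum_mul_left, ENNReal.tsum_geometric]
  have hS₀ : (1 - t ^ p)⁻¹ ≠ 0 := ENNReal.inv_ne_zero.2 (ENNReal.sub_ne_top ENNReal.one_ne_top)
  have hS : (1 - t ^ p)⁻¹ ≠ ∞ :=
    ENNReal.inv_ne_top.2 (tsub_pos_of_lt (ENNReal.rpow_lt_one ht hp)).ne'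
  refine (ENNReal.mul_le_mul_iff_left hS₀ hS).1 ?_
  calc (1 - r * t)⁻¹ ^ p * (1 - t ^ p)⁻¹
      = ∑' n : ℕ, (∑' m : ℕ, r ^ m * h (n + m)) ^ p := by
        simp_rw [hinner, ENNReal.mul_rpow_of_nonneg _ _ hp.le, ← ENNReal.rpow_natCast_mul,
          mul_comm _ p, ENNReal.rpow_mul_natCast, ENNReal.tsum_mul_right, ENNReal.tsum_geometric,
          mul_comm]
    _ ≤ ∑' j : ℤ, (∑' m : ℕ, r ^ m * h (j + m)) ^ p :=
        ENNReal.tsum_comp_le_tsum_of_injective Nat.cast_injective _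
    _ ≤ K * (1 - t ^ p)⁻¹ := hnorm ▸ hK h

theorem isLeast_geometric_kernel_constant (r : ℝ≥0∞) {p : ℝ} (hp : 1 ≤ p) :
    IsLeast {K | ∀ h : ℤ → ℝ≥0∞,
      ∑' j : ℤ, (∑' m : ℕ, r ^ m * h (j + m)) ^ p ≤ K * ∑' i, h i ^ p} ((1 - r)⁻¹ ^ p) := by
  refine ⟨fun h => ?_, fun K hK => ?_⟩
  · simpa only [ENNReal.tsum_geometric] using tsum_rpow_tsum_mul_add_le hp (r ^ ·) h
  · have hlim : Tendsto (fun t => (1 - r * t)⁻¹ ^ p) (𝓝[<] 1) (𝓝 ((1 - r)⁻¹ ^ p)) := by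
      have hrt : Tendsto (fun t => r * t) (𝓝 1) (𝓝 r) := by
        simpa using ENNReal.Tendsto.const_mul (tendsto_id (x := 𝓝 (1 : ℝ≥0∞))) (.inl one_ne_zero)
      exact (((ENNReal.continuous_sub_left ENNReal.one_ne_top).tendsto r).comp hrt).inv
        |>.ennrpow_const p |>.mono_left nhdsWithin_le_nhds
    have : (𝓝[<] (1 : ℝ≥0∞)).NeBot := nhdsLT_neBot_of_exists_lt ⟨0, zero_lt_one⟩
    exact le_of_tendsto hlim (eventually_nhdsWithin_of_forall fun t ht =>
      inv_one_sub_mul_rpow_le_of_geometric_kernel_bound (by linarith) ht hK)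

namespace ENNReal

theorem rpow_mul_rpow_eq_mul_rpow {p : ℝ} (hp : 0 < p) (Q a : ℝ≥0∞) (x : ℝ) :
    Q ^ x * a ^ p = (Q ^ (x / p) * a) ^ p := by
  rw [mul_rpow_of_nonneg _ _ hp.le, ← rpow_mul, div_mul_cancel₀ _ hp.ne']

theorem rpow_mul_rpow_neg_mul {Q : ℝ≥0∞} (hQ₀ : Q ≠ 0) (hQ : Q ≠ ∞) (x : ℝ) (a : ℝ≥0∞) :
    Q ^ x * (Q ^ (-x) * a) = a := by
  rw [← mul_assoc, ← rpow_add _ _ hQ₀ hQ, add_neg_cancel, rpow_zero, one_mul]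

theorem rpow_mul_tsum_rpow_mul_rpow_eq {Q : ℝ≥0∞} (hQ₀ : Q ≠ 0) (hQ : Q ≠ ∞) {p : ℝ} (hp : 0 < p)
    (α x : ℝ) (g : ℝ → ℝ≥0∞) :
    Q ^ (x * (p * (α - 1) + 1)) * (∑' m : ℕ, Q ^ ((x + m) * (1 - α)) * g (x + m)) ^ p
      = (∑' m : ℕ, (Q ^ ((p - 1) / p - α)) ^ m * (Q ^ ((x + m) / p) * g (x + m))) ^ p := by
  set γ := (p - 1) / p - α
  have hsplit (m : ℕ) : Q ^ ((x + m) * (1 - α)) * g (x + m)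
      = Q ^ (x * γ) * ((Q ^ γ) ^ m * (Q ^ ((x + m) / p) * g (x + m))) := by
    rw [← rpow_mul_natCast, ← mul_assoc, ← mul_assoc, ← rpow_add _ _ hQ₀ hQ,
      ← rpow_add _ _ hQ₀ hQ]
    congr 2
    simp only [γ]
    field_simp
    ring
  simp_rw [hsplit, ENNReal.tsum_mul_left, mul_rpow_of_nonneg _ _ hp.le, ← mul_assoc, ← rpow_mul,
    ← rpow_add _ _ hQ₀ hQ]
  have hexp : x * (p * (α - 1) + 1) + x * γ * p = 0 := by
    simp only [γ]
    field_simp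
    ring
  rw [hexp, rpow_zero, one_mul]

end ENNReal

theorem ofReal_div_rpow_neg_mul_ofReal {q γ : ℝ} (hq : 0 < q) (hq1 : q < 1) (hγ : 0 < γ)
    (p : ℝ) :
    ENNReal.ofReal (((1 - q ^ γ) / (1 - q)) ^ (-p)) * ENNReal.ofReal ((1 - q) ^ (-p - 1) * (1 - q))
      = (1 - ENNReal.ofReal q ^ γ)⁻¹ ^ p := by
  have ha : 0 < 1 - q ^ γ := sub_pos.2 (Real.rpow_lt_one hq.le hq1 hγ)
  have hb : 0 < 1 - q := sub_pos.2 hq1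
  have hb' : (1 - q) ^ (-p - 1) * (1 - q) = (1 - q) ^ (-p) := by
    rw [← Real.rpow_add_one hb.ne', sub_add_cancel]
  rw [← ENNReal.ofReal_mul (by positivity), hb', Real.div_rpow ha.le hb.le,
    div_mul_cancel₀ _ (by positivity), ← ENNReal.ofReal_rpow_of_pos ha, ENNReal.inv_rpow,
    ← ENNReal.rpow_neg, ENNReal.ofReal_sub _ (by positivity), ENNReal.ofReal_one,
    ENNReal.ofReal_rpow_of_pos hq]

noncomputable def qRescale (q p : ℝ) (f : ℝ → ℝ≥0∞) (i : ℤ) : ℝ≥0∞ :=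
  ENNReal.ofReal q ^ ((i : ℝ) / p) * f (q ^ (i : ℝ))

section qRescale

variable {q p : ℝ}

theorem tsum_rpow_mul_tsum_rpow_eq_qRescale (hq : 0 < q) (hp : 0 < p) (α : ℝ)
    (f : ℝ → ℝ≥0∞) :
    ∑' j : ℤ, ENNReal.ofReal q ^ ((j : ℝ) * (p * (α - 1) + 1)) *
        (∑' m : ℕ, ENNReal.ofReal q ^ (((j : ℝ) + (m : ℝ)) * (1 - α)) *
          f (q ^ ((j : ℝ) + (m : ℝ)))) ^ p
      = ∑' j : ℤ,
          (∑' m : ℕ, (ENNReal.ofReal q ^ ((p - 1) / p - α)) ^ m * qRescale q p f (j + m)) ^ p := by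
  simp only [qRescale, Int.cast_add, Int.cast_natCast]
  exact tsum_congr fun j => ENNReal.rpow_mul_tsum_rpow_mul_rpow_eq
    (ENNReal.ofReal_pos.2 hq).ne' ENNReal.ofReal_ne_top hp α j (fun x => f (q ^ x))

theorem tsum_rpow_mul_rpow_eq_qRescale (hp : 0 < p) (f : ℝ → ℝ≥0∞) :
    ∑' i : ℤ, ENNReal.ofReal q ^ (i : ℝ) * f (q ^ (i : ℝ)) ^ p = ∑' i, qRescale q p f i ^ p := by
  simp only [ENNReal.rpow_mul_rpow_eq_mul_rpow hp, qRescale]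

theorem qRescale_surjective (hq : 0 < q) (hq1 : q ≠ 1) : Function.Surjective (qRescale q p) :=
  fun h => ⟨fun x => ENNReal.ofReal q ^ (-(Real.logb q x / p)) * h (round (Real.logb q x)),
    funext fun i => by
      simp only [qRescale, Real.logb_rpow hq hq1, round_intCast,
        ENNReal.rpow_mul_rpow_neg_mul (ENNReal.ofReal_pos.2 hq).ne' ENNReal.ofReal_ne_top]⟩

end qRescale

theorem q_hardy_best_constant (q p α : ℝ) (hq : 0 < q) (hq1 : q < 1) (hp : 1 < p)
    (hα : α < 1 - 1 / p) :
    IsLeast {C : ℝ≥0∞ | ∀ f : ℝ → ℝ≥0∞,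
        ∑' j : ℤ, (ENNReal.ofReal q) ^ ((j : ℝ) * (p * (α - 1) + 1)) *
            (∑' m : ℕ, (ENNReal.ofReal q) ^ (((j : ℝ) + (m : ℝ)) * (1 - α)) *
              f (q ^ ((j : ℝ) + (m : ℝ)))) ^ p
          ≤ C * ENNReal.ofReal ((1 - q) ^ (-p - 1) * (1 - q)) *
              ∑' i : ℤ, (ENNReal.ofReal q) ^ (i : ℝ) * (f (q ^ (i : ℝ))) ^ p}
      (ENNReal.ofReal (((1 - q ^ ((p - 1) / p - α)) / (1 - q)) ^ (-p))) := by
  have hp₀ : 0 < p := by linarith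
  have hγ : 0 < (p - 1) / p - α := by
    field_simp at hα ⊢
    linarith
  have hc₀ : ENNReal.ofReal ((1 - q) ^ (-p - 1) * (1 - q)) ≠ 0 := by
    rw [ne_eq, ENNReal.ofReal_eq_zero, not_le]
    exact mul_pos (Real.rpow_pos_of_pos (by linarith) _) (by linarith)
  obtain ⟨hmem, hleast⟩ :=
    isLeast_geometric_kernel_constant (ENNReal.ofReal q ^ ((p - 1) / p - α)) hp.le
  refine ⟨fun f => ?_, fun C hC => ?_⟩
  · rw [tsum_rpow_mul_tsum_rpow_eq_qRescale hq hp₀, tsum_rpow_mul_rpow_eq_qRescale hp₀,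
      ofReal_div_rpow_neg_mul_ofReal hq hq1 hγ]
    exact hmem _
  · rw [← ENNReal.mul_le_mul_iff_left hc₀ ENNReal.ofReal_ne_top,
      ofReal_div_rpow_neg_mul_ofReal hq hq1 hγ]
    refine hleast fun h => ?_
    obtain ⟨f, rfl⟩ := qRescale_surjective (p := p) hq hq1.ne h
    simpa only [tsum_rpow_mul_tsum_rpow_eq_qRescale hq hp₀, tsum_rpow_mul_rpow_eq_qRescale hp₀]
      using hC f
end
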